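/- The risky Bellman equation has a unique solution: there exists exactly one bounded function G : 𝒵 → [0,1] satisfying G(x,u) = c(x) + (1−c(x))·γ·max_{x'∈f̂(x,u)} min_{u'∈𝒰} G(x',u') for all (x,u) ∈ 𝒵. -/
import Mathlib


/-- The risky Bellman operator. -/
noncomputable def riskyBellman {X U : Type*} (fh : X × U → Set X) (h : X → ℝ)
    (γ : ℝ) (G : X × U → ℝ) (p : X × U) : ℝ :=
  (if 0 < h p.1 then (1 : ℝ) else 0) +
    (1 - if 0 < h p.1 then (1 : ℝ) else 0) * γ *
      ⨆ x' : fh p, ⨅ u' : U, G (↑x', u')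

lemma abs_ciSup_sub_ciSup_le {ι : Type*} [Nonempty ι] [Finite ι] (f g : ι → ℝ) (C : ℝ)
    (hfg : ∀ i, |f i - g i| ≤ C) : |(⨆ i, f i) - ⨆ i, g i| ≤ C := by
  have bf : BddAbove (Set.range f) := (Set.finite_range f).bddAbove
  have bg : BddAbove (Set.range g) := (Set.finite_range g).bddAbove
  rw [abs_sub_le_iff]
  constructor <;> rw [sub_le_iff_le_add] <;> apply ciSup_le <;> intro i
  · have h1 := (abs_sub_le_iff.1 (hfg i)).1
    have h2 : g i ≤ ⨆ j, g j := le_ciSup bg i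
    linarith
  · have h1 := (abs_sub_le_iff.1 (hfg i)).2
    have h2 : f i ≤ ⨆ j, f j := le_ciSup bf i
    linarith

lemma abs_ciInf_sub_ciInf_le {ι : Type*} [Nonempty ι] [Finite ι] (f g : ι → ℝ) (C : ℝ)
    (hfg : ∀ i, |f i - g i| ≤ C) : |(⨅ i, f i) - ⨅ i, g i| ≤ C := by
  have bf : BddBelow (Set.range f) := (Set.finite_range f).bddBelow
  have bg : BddBelow (Set.range g) := (Set.finite_range g).bddBelow
  rw [abs_sub_le_iff]
  constructor <;> rw [sub_le_iff_le_add, ← sub_le_iff_le_add'] <;>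
    apply le_ciInf <;> intro i
  · have h1 := (abs_sub_le_iff.1 (hfg i)).1
    have h2 : (⨅ j, f j) ≤ f i := ciInf_le bf i
    linarith
  · have h1 := (abs_sub_le_iff.1 (hfg i)).2
    have h2 : (⨅ j, g j) ≤ g i := ciInf_le bg i
    linarith

/-- the risky Bellman equation has exactly one solution among
functions `G : 𝒵 → [0,1]`. -/
theorem riskyBellman_unique_fixed_point {X U : Type*} [Fintype X] [Fintype U]
    [Nonempty X] [Nonempty U]
    (fh : X × U → Set X) (hne : ∀ p, (fh p).Nonempty)
    (h : X → ℝ) (γ : ℝ) (hγ : γ ∈ Set.Ioo (0 : ℝ) 1) :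
    ∃! G : X × U → ℝ, (∀ p, G p ∈ Set.Icc (0 : ℝ) 1) ∧
      ∀ p, G p = riskyBellman fh h γ G p := by
  obtain ⟨hγ0, hγ1⟩ := hγ
  set T : (X × U → ℝ) → (X × U → ℝ) := riskyBellman fh h γ with hT
  -- pointwise Lipschitz bound
  have key : ∀ G G' : X × U → ℝ, ∀ p, |T G p - T G' p| ≤ γ * dist G G' := by
    intro G G' p
    haveI : Nonempty ↥(fh p) := (hne p).to_subtype
    have hS : |(⨆ x' : fh p, ⨅ u' : U, G (↑x', u')) -
        ⨆ x' : fh p, ⨅ u' : U, G' (↑x', u')| ≤ dist G G' := by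
      apply abs_ciSup_sub_ciSup_le
      intro x'
      apply abs_ciInf_sub_ciInf_le
      intro u'
      rw [← Real.dist_eq]
      exact dist_le_pi_dist G G' (↑x', u')
    have hc : |1 - (if 0 < h p.1 then (1 : ℝ) else 0)| ≤ 1 := by
      split_ifs <;> norm_num
    have expand : T G p - T G' p =
        (1 - (if 0 < h p.1 then (1 : ℝ) else 0)) * γ *
          ((⨆ x' : fh p, ⨅ u' : U, G (↑x', u')) -
            ⨆ x' : fh p, ⨅ u' : U, G' (↑x', u')) := by
      simp only [hT, riskyBellman]; ring
    rw [expand, abs_mul, abs_mul, abs_of_pos hγ0]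
    calc |1 - (if 0 < h p.1 then (1 : ℝ) else 0)| * γ * _
        ≤ 1 * γ * dist G G' := by
          apply mul_le_mul (mul_le_mul_of_nonneg_right hc hγ0.le) hS (abs_nonneg _)
          positivity
      _ = γ * dist G G' := by ring
  have hC : ContractingWith ⟨γ, hγ0.le⟩ T := by
    refine ⟨by exact_mod_cast hγ1, LipschitzWith.of_dist_le_mul fun G G' => ?_⟩
    rw [dist_pi_le_iff (by positivity)]
    intro p
    rw [Real.dist_eq]
    exact key G G' p
  -- invariance of Icc 0 1
  have hinv : ∀ G : X × U → ℝ, (∀ p, G p ∈ Set.Icc (0 : ℝ) 1) →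
      ∀ p, T G p ∈ Set.Icc (0 : ℝ) 1 := by
    intro G hG p
    haveI : Nonempty ↥(fh p) := (hne p).to_subtype
    set s := ⨆ x' : fh p, ⨅ u' : U, G (↑x', u') with hs
    have hs0 : 0 ≤ s := by
      obtain ⟨x', hx'⟩ := hne p
      have h1 : (0 : ℝ) ≤ ⨅ u' : U, G (x', u') :=
        le_ciInf fun u' => (hG (x', u')).1
      have h2 : (⨅ u' : U, G (x', u')) ≤ s :=
        le_ciSup (f := fun x'' : fh p => ⨅ u' : U, G (↑x'', u'))
          (Set.finite_range _).bddAbove ⟨x', hx'⟩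
      linarith
    have hs1 : s ≤ 1 := by
      apply ciSup_le
      intro x'
      obtain ⟨u'⟩ := ‹Nonempty U›
      have h1 : (⨅ u' : U, G (↑x', u')) ≤ G (↑x', u') :=
        ciInf_le (Set.finite_range _).bddBelow u'
      exact h1.trans (hG (↑x', u')).2
    have : T G p = (if 0 < h p.1 then (1 : ℝ) else 0) +
        (1 - if 0 < h p.1 then (1 : ℝ) else 0) * γ * s := rfl
    rw [this]
    split_ifs
    · norm_num
    · constructor
      · simp; positivity
      · simp only [sub_zero, one_mul, zero_add]
        calc γ * s ≤ γ * 1 := by nlinarith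
          _ ≤ 1 := by linarith
  -- the fixed point
  set Gstar := ContractingWith.fixedPoint T hC with hGstar
  have hfix : T Gstar = Gstar := hC.fixedPoint_isFixedPt
  -- Gstar lies in the closed invariant set
  have hmem : ∀ p, Gstar p ∈ Set.Icc (0 : ℝ) 1 := by
    have hclosed : IsClosed {G : X × U → ℝ | ∀ p, G p ∈ Set.Icc (0 : ℝ) 1} := by
      have : {G : X × U → ℝ | ∀ p, G p ∈ Set.Icc (0 : ℝ) 1} =
          ⋂ p, (fun G : X × U → ℝ => G p) ⁻¹' Set.Icc (0 : ℝ) 1 := by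
        ext G; simp
      rw [this]
      exact isClosed_iInter fun p => isClosed_Icc.preimage (continuous_apply p)
    have htend := hC.tendsto_iterate_fixedPoint (fun _ => (0 : ℝ))
    have hiter : ∀ n, (T^[n] (fun _ => (0 : ℝ))) ∈
        {G : X × U → ℝ | ∀ p, G p ∈ Set.Icc (0 : ℝ) 1} := by
      intro n
      induction n with
      | zero => intro p; simp
      | succ n ih =>
        rw [Function.iterate_succ_apply']
        exact hinv _ ih
    exact hclosed.mem_of_tendsto htend (Filter.Eventually.of_forall hiter)
  refine ⟨Gstar, ⟨hmem, fun p => (congrFun hfix p).symm⟩, ?_⟩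
  intro G' ⟨_, hG'⟩
  exact hC.fixedPoint_unique (funext fun p => (hG' p).symm)
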